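/- Suppose T is Σ1-sound. Then Prov_T^Σ(x) is a provability predicate of T: for any arithmetical formula φ, T ⊢ φ if and only if PA ⊢ Prov_T^Σ(⌜φ⌝). -/
import Mathlib


namespace PLN

/-! ### Modal formulas and the logics N⁺A_{m,n} -/

/-- Formulas of modal propositional logic. -/
inductive MFml : Type
  | var : ℕ → MFml
  | bot : MFml
  | neg : MFml → MFml
  | and : MFml → MFml → MFml
  | or : MFml → MFml → MFml
  | imp : MFml → MFml → MFml
  | box : MFml → MFml
  deriving DecidableEq

/-- `boxIter n A` is `□ⁿ A`, where `□⁰ A = A` and `□^(k+1) A = □ (□ᵏ A)`. -/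
def boxIter : ℕ → MFml → MFml
  | 0, A => A
  | k + 1, A => .box (boxIter k A)

/-- Evaluation of a modal formula under a valuation of its "propositional atoms"
(propositional variables, and boxed formulas); used to define propositional tautologies
in the modal language. -/
def MFml.evalTC (v : MFml → Prop) : MFml → Prop
  | .bot => False
  | .neg A => ¬ A.evalTC v
  | .and A B => A.evalTC v ∧ B.evalTC v
  | .or A B => A.evalTC v ∨ B.evalTC v
  | .imp A B => A.evalTC v → B.evalTC v
  | A => v A

/-- Propositional tautologies in the modal language. -/
def MTaut (A : MFml) : Prop := ∀ v, A.evalTC v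

/-- Provability in the logic `N⁺A_{m,n}`: the pure logic of necessitation `N`
(propositional tautologies, modus ponens, necessitation) together with the axiom scheme
`□ⁿA → □ᵐA` and the rule `Ros□` (from `¬□A` infer `¬□□A`). -/
inductive NAProves (m n : ℕ) : MFml → Prop
  | taut {A} : MTaut A → NAProves m n A
  | acc (A) : NAProves m n (.imp (boxIter n A) (boxIter m A))
  | mp {A B} : NAProves m n (.imp A B) → NAProves m n A → NAProves m n B
  | nec {A} : NAProves m n A → NAProves m n (.box A)
  | ros {A} : NAProves m n (.neg (.box A)) → NAProves m n (.neg (.box (.box A)))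

/-- `IsSub B A` : `B` is a subformula of `A`. -/
inductive IsSub : MFml → MFml → Prop
  | refl (A) : IsSub A A
  | neg {B A} : IsSub B A → IsSub B (.neg A)
  | andL {B A C} : IsSub B A → IsSub B (.and A C)
  | andR {B A C} : IsSub B C → IsSub B (.and A C)
  | orL {B A C} : IsSub B A → IsSub B (.or A C)
  | orR {B A C} : IsSub B C → IsSub B (.or A C)
  | impL {B A C} : IsSub B A → IsSub B (.imp A C)
  | impR {B A C} : IsSub B C → IsSub B (.imp A C)
  | box {B A} : IsSub B A → IsSub B (.box A)

/-! ### N-frames and N-models -/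

/-- An N-model on a set `W` of worlds: an N-frame (a binary relation `≺_B` on `W`
for each modal formula `B`) together with a valuation of propositional variables. -/
structure NModel (W : Type) where
  rel : MFml → W → W → Prop
  val : W → ℕ → Prop

/-- The forcing relation of an N-model:
`x ⊩ □B` iff every `y` with `x ≺_B y` satisfies `y ⊩ B`. -/
def NModel.Forces {W : Type} (M : NModel W) : W → MFml → Prop
  | x, .var p => M.val x p
  | _, .bot => False
  | x, .neg A => ¬ NModel.Forces M x A
  | x, .and A B => NModel.Forces M x A ∧ NModel.Forces M x B
  | x, .or A B => NModel.Forces M x A ∨ NModel.Forces M x B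
  | x, .imp A B => NModel.Forces M x A → NModel.Forces M x B
  | x, .box A => ∀ y, M.rel A x y → NModel.Forces M y A

/-- The relations `≺_B^k` : `x ≺_B^0 y` iff `x = y`, and
`x ≺_B^(k+1) y` iff `∃ w, x ≺_{□ᵏB} w` and `w ≺_B^k y`. -/
def NModel.relIter {W : Type} (M : NModel W) (B : MFml) : ℕ → W → W → Prop
  | 0, x, y => x = y
  | k + 1, x, y => ∃ w, M.rel (boxIter k B) x w ∧ NModel.relIter M B k w y

/-- `(m,n)`-accessibility of (the frame of) an N-model. -/
def NModel.Accessible {W : Type} (M : NModel W) (m n : ℕ) : Prop :=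
  ∀ (B : MFml) (x y : W), NModel.relIter M B m x y → NModel.relIter M B n x y

/-! ### The language of first-order arithmetic -/

/-- Terms of the language of arithmetic, with de Bruijn variables. -/
inductive ATerm : Type
  | var : ℕ → ATerm
  | zero : ATerm
  | succ : ATerm → ATerm
  | add : ATerm → ATerm → ATerm
  | mul : ATerm → ATerm → ATerm
  deriving DecidableEq

/-- Formulas of the language of arithmetic (with `≤` primitive), de Bruijn variables. -/
inductive AFml : Type
  | eq : ATerm → ATerm → AFml
  | le : ATerm → ATerm → AFml
  | neg : AFml → AFml
  | and : AFml → AFml → AFml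
  | or : AFml → AFml → AFml
  | imp : AFml → AFml → AFml
  | all : AFml → AFml
  | ex : AFml → AFml
  deriving DecidableEq

/-- Lift (shift up by one) the variables `≥ c` of a term. -/
def ATerm.lift (c : ℕ) : ATerm → ATerm
  | .var n => .var (if n < c then n else n + 1)
  | .zero => .zero
  | .succ t => .succ (t.lift c)
  | .add t s => .add (t.lift c) (s.lift c)
  | .mul t s => .mul (t.lift c) (s.lift c)

/-- Simultaneous substitution in terms. -/
def ATerm.substAll (σ : ℕ → ATerm) : ATerm → ATerm
  | .var n => σ n
  | .zero => .zero
  | .succ t => .succ (t.substAll σ)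
  | .add t s => .add (t.substAll σ) (s.substAll σ)
  | .mul t s => .mul (t.substAll σ) (s.substAll σ)

/-- Pushing a substitution under a binder. -/
def liftSub (σ : ℕ → ATerm) : ℕ → ATerm
  | 0 => .var 0
  | n + 1 => (σ n).lift 0

/-- Lift (shift up by one) the free variables `≥ c` of a formula. -/
def AFml.lift (c : ℕ) : AFml → AFml
  | .eq t s => .eq (t.lift c) (s.lift c)
  | .le t s => .le (t.lift c) (s.lift c)
  | .neg φ => .neg (φ.lift c)
  | .and φ ψ => .and (φ.lift c) (ψ.lift c)
  | .or φ ψ => .or (φ.lift c) (ψ.lift c)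
  | .imp φ ψ => .imp (φ.lift c) (ψ.lift c)
  | .all φ => .all (φ.lift (c + 1))
  | .ex φ => .ex (φ.lift (c + 1))

/-- Simultaneous (capture-avoiding) substitution in formulas. -/
def AFml.substAll (σ : ℕ → ATerm) : AFml → AFml
  | .eq t s => .eq (t.substAll σ) (s.substAll σ)
  | .le t s => .le (t.substAll σ) (s.substAll σ)
  | .neg φ => .neg (φ.substAll σ)
  | .and φ ψ => .and (φ.substAll σ) (ψ.substAll σ)
  | .or φ ψ => .or (φ.substAll σ) (ψ.substAll σ)
  | .imp φ ψ => .imp (φ.substAll σ) (ψ.substAll σ)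
  | .all φ => .all (φ.substAll (liftSub σ))
  | .ex φ => .ex (φ.substAll (liftSub σ))

def subst0Env (t : ATerm) : ℕ → ATerm
  | 0 => t
  | n + 1 => .var n

def subst2Env (t s : ATerm) : ℕ → ATerm
  | 0 => t
  | 1 => s
  | n + 2 => .var n

/-- Substitute the term `t` for the free variable `0` (decrementing other variables). -/
def AFml.subst0 (φ : AFml) (t : ATerm) : AFml := φ.substAll (subst0Env t)

/-- Substitute the terms `t`, `s` for the free variables `0`, `1` simultaneously. -/
def AFml.subst2 (φ : AFml) (t s : ATerm) : AFml := φ.substAll (subst2Env t s)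

/-- Substitute `S(var 0)` for `var 0`, leaving all other free variables unchanged. -/
def succSubst (φ : AFml) : AFml :=
  φ.substAll fun n => if n = 0 then .succ (.var 0) else .var n

/-- All variables of a term are `< c`. -/
def ATerm.FreeLt (c : ℕ) : ATerm → Prop
  | .var n => n < c
  | .zero => True
  | .succ t => t.FreeLt c
  | .add t s => t.FreeLt c ∧ s.FreeLt c
  | .mul t s => t.FreeLt c ∧ s.FreeLt c

/-- All free variables of a formula are `< c`; `FreeLt 0 φ` says that `φ` is a sentence. -/
def AFml.FreeLt (c : ℕ) : AFml → Prop
  | .eq t s => t.FreeLt c ∧ s.FreeLt c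
  | .le t s => t.FreeLt c ∧ s.FreeLt c
  | .neg φ => φ.FreeLt c
  | .and φ ψ => φ.FreeLt c ∧ ψ.FreeLt c
  | .or φ ψ => φ.FreeLt c ∧ ψ.FreeLt c
  | .imp φ ψ => φ.FreeLt c ∧ ψ.FreeLt c
  | .all φ => φ.FreeLt (c + 1)
  | .ex φ => φ.FreeLt (c + 1)

/-- The numeral `n̄`. -/
def numeral : ℕ → ATerm
  | 0 => .zero
  | n + 1 => .succ (numeral n)

/-- A Gödel numbering of terms. -/
def ATerm.code : ATerm → ℕ
  | .var n => Nat.pair 0 n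
  | .zero => Nat.pair 1 0
  | .succ t => Nat.pair 2 t.code
  | .add t s => Nat.pair 3 (Nat.pair t.code s.code)
  | .mul t s => Nat.pair 4 (Nat.pair t.code s.code)

/-- A Gödel numbering of formulas. -/
def AFml.code : AFml → ℕ
  | .eq t s => Nat.pair 0 (Nat.pair t.code s.code)
  | .le t s => Nat.pair 1 (Nat.pair t.code s.code)
  | .neg φ => Nat.pair 2 φ.code
  | .and φ ψ => Nat.pair 3 (Nat.pair φ.code ψ.code)
  | .or φ ψ => Nat.pair 4 (Nat.pair φ.code ψ.code)
  | .imp φ ψ => Nat.pair 5 (Nat.pair φ.code ψ.code)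
  | .all φ => Nat.pair 6 φ.code
  | .ex φ => Nat.pair 7 φ.code

/-- `⌜φ⌝`, the numeral of the Gödel number of `φ`. -/
def gnum (φ : AFml) : ATerm := numeral φ.code

/-- For a formula `P(x)` (with free variable `var 0`), `P.appNum φ` is `P(⌜φ⌝)`. -/
def AFml.appNum (P φ : AFml) : AFml := P.subst0 (gnum φ)

/-- Iterated application of a predicate: `iterPred P k φ = P(⌜P(⌜⋯P(⌜φ⌝)⋯⌝)⌝)` (`k` times). -/
def iterPred (P : AFml) : ℕ → AFml → AFml
  | 0, φ => φ
  | k + 1, φ => P.appNum (iterPred P k φ)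

/-! ### Satisfaction in the standard model -/

def ATerm.val (ρ : ℕ → ℕ) : ATerm → ℕ
  | .var n => ρ n
  | .zero => 0
  | .succ t => t.val ρ + 1
  | .add t s => t.val ρ + s.val ρ
  | .mul t s => t.val ρ * s.val ρ

def consEnv (a : ℕ) (ρ : ℕ → ℕ) : ℕ → ℕ
  | 0 => a
  | n + 1 => ρ n

/-- Satisfaction in the standard model `ℕ` under an environment `ρ`. -/
def AFml.Sat (ρ : ℕ → ℕ) : AFml → Prop
  | .eq t s => t.val ρ = s.val ρ
  | .le t s => t.val ρ ≤ s.val ρ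
  | .neg φ => ¬ φ.Sat ρ
  | .and φ ψ => φ.Sat ρ ∧ ψ.Sat ρ
  | .or φ ψ => φ.Sat ρ ∨ ψ.Sat ρ
  | .imp φ ψ => φ.Sat ρ → ψ.Sat ρ
  | .all φ => ∀ a, φ.Sat (consEnv a ρ)
  | .ex φ => ∃ a, φ.Sat (consEnv a ρ)

/-- `ℕ ⊨ φ`. -/
def TrueN (φ : AFml) : Prop := φ.Sat fun _ => 0

/-! ### The arithmetical hierarchy: Δ₀, Σ₁, Π₁ -/

/-- `Δ₀` formulas: every quantifier is bounded. -/
inductive IsDelta0 : AFml → Prop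
  | eq (t s : ATerm) : IsDelta0 (.eq t s)
  | le (t s : ATerm) : IsDelta0 (.le t s)
  | neg {φ} : IsDelta0 φ → IsDelta0 (.neg φ)
  | and {φ ψ} : IsDelta0 φ → IsDelta0 ψ → IsDelta0 (.and φ ψ)
  | or {φ ψ} : IsDelta0 φ → IsDelta0 ψ → IsDelta0 (.or φ ψ)
  | imp {φ ψ} : IsDelta0 φ → IsDelta0 ψ → IsDelta0 (.imp φ ψ)
  | ball {φ : AFml} (t : ATerm) : IsDelta0 φ → IsDelta0 (.all (.imp (.le (.var 0) (ATerm.lift 0 t)) φ))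
  | bex {φ : AFml} (t : ATerm) : IsDelta0 φ → IsDelta0 (.ex (.and (.le (.var 0) (ATerm.lift 0 t)) φ))

mutual
  /-- `Σ₁` formulas. -/
  inductive IsSigma1 : AFml → Prop
    | delta0 {φ} : IsDelta0 φ → IsSigma1 φ
    | and {φ ψ} : IsSigma1 φ → IsSigma1 ψ → IsSigma1 (.and φ ψ)
    | or {φ ψ} : IsSigma1 φ → IsSigma1 ψ → IsSigma1 (.or φ ψ)
    | ex {φ} : IsSigma1 φ → IsSigma1 (.ex φ)
    | negPi {φ} : IsPi1 φ → IsSigma1 (.neg φ)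
    | impPiSigma {φ ψ} : IsPi1 φ → IsSigma1 ψ → IsSigma1 (.imp φ ψ)
  /-- `Π₁` formulas. -/
  inductive IsPi1 : AFml → Prop
    | delta0 {φ} : IsDelta0 φ → IsPi1 φ
    | and {φ ψ} : IsPi1 φ → IsPi1 ψ → IsPi1 (.and φ ψ)
    | or {φ ψ} : IsPi1 φ → IsPi1 ψ → IsPi1 (.or φ ψ)
    | all {φ} : IsPi1 φ → IsPi1 (.all φ)
    | negSigma {φ} : IsSigma1 φ → IsPi1 (.neg φ)
    | impSigmaPi {φ ψ} : IsSigma1 φ → IsPi1 ψ → IsPi1 (.imp φ ψ)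
end

/-! ### A Hilbert-style proof system for first-order arithmetic -/

/-- Evaluation of an arithmetical formula under a valuation of its "propositionally atomic"
subformulas (atomic or quantified formulas); used for propositional tautologies and
tautological consequence. -/
def AFml.evalProp (v : AFml → Prop) : AFml → Prop
  | .neg φ => ¬ φ.evalProp v
  | .and φ ψ => φ.evalProp v ∧ ψ.evalProp v
  | .or φ ψ => φ.evalProp v ∨ ψ.evalProp v
  | .imp φ ψ => φ.evalProp v → ψ.evalProp v
  | φ => v φ

/-- Propositional tautologies in the language of arithmetic. -/
def ATaut (φ : AFml) : Prop := ∀ v, φ.evalProp v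

/-- `φ` is a tautological consequence of the set `X` of formulas. -/
def TC (X : Set AFml) (φ : AFml) : Prop :=
  ∀ v : AFml → Prop, (∀ ψ ∈ X, ψ.evalProp v) → φ.evalProp v

def iffF (φ ψ : AFml) : AFml := .and (.imp φ ψ) (.imp ψ φ)

/-- Hilbert-style provability from the set of axioms `Γ` in classical first-order
logic with equality. -/
inductive Proves (Γ : Set AFml) : AFml → Prop
  | ax {φ} : φ ∈ Γ → Proves Γ φ
  | taut {φ} : ATaut φ → Proves Γ φ
  | mp {φ ψ} : Proves Γ (.imp φ ψ) → Proves Γ φ → Proves Γ ψ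
  | allE (φ : AFml) (t : ATerm) : Proves Γ (.imp (.all φ) (φ.subst0 t))
  | exI (φ : AFml) (t : ATerm) : Proves Γ (.imp (φ.subst0 t) (.ex φ))
  | allImp (φ ψ : AFml) : Proves Γ (.imp (.all (.imp φ ψ)) (.imp (.all φ) (.all ψ)))
  | vacAll (φ : AFml) : Proves Γ (.imp φ (.all (AFml.lift 0 φ)))
  | exDef (φ : AFml) : Proves Γ (iffF (.ex φ) (.neg (.all (.neg φ))))
  | gen {φ} : Proves Γ φ → Proves Γ (.all φ)
  | eqRefl (t : ATerm) : Proves Γ (.eq t t)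
  | eqSubst (φ : AFml) (t s : ATerm) : Proves Γ (.imp (.eq t s) (.imp (φ.subst0 t) (φ.subst0 s)))

/-! ### Peano arithmetic -/

/-- The axioms of Peano arithmetic. -/
inductive PAax : AFml → Prop
  | succNeZero : PAax (.all (.neg (.eq (.succ (.var 0)) .zero)))
  | succInj :
      PAax (.all (.all (.imp (.eq (.succ (.var 1)) (.succ (.var 0))) (.eq (.var 1) (.var 0)))))
  | addZero : PAax (.all (.eq (.add (.var 0) .zero) (.var 0)))
  | addSucc :
      PAax (.all (.all (.eq (.add (.var 1) (.succ (.var 0))) (.succ (.add (.var 1) (.var 0))))))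
  | mulZero : PAax (.all (.eq (.mul (.var 0) .zero) .zero))
  | mulSucc :
      PAax (.all (.all (.eq (.mul (.var 1) (.succ (.var 0)))
        (.add (.mul (.var 1) (.var 0)) (.var 1)))))
  | leDef :
      PAax (.all (.all (iffF (.le (.var 1) (.var 0))
        (.ex (.eq (.add (.var 0) (.var 2)) (.var 1))))))
  | ind (φ : AFml) :
      PAax (.imp (.and (φ.subst0 .zero) (.all (.imp φ (succSubst φ)))) (.all φ))

/-- Peano arithmetic, as a set of axioms. -/
def PA : Set AFml := {φ | PAax φ}

/-- The sentence `0 = 1`. -/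
def botFml : AFml := .eq .zero (.succ .zero)

/-- `t < s`, as the formula `S(t) ≤ s`. -/
def ltF (t s : ATerm) : AFml := .le (.succ t) s

/-- `Δ₁(PA)` formulas: `Σ₁` formulas which are `PA`-provably equivalent to a `Π₁` formula. -/
def IsDelta1PA (φ : AFml) : Prop :=
  IsSigma1 φ ∧ ∃ ψ, IsPi1 ψ ∧ Proves PA (iffF φ ψ)

/-! ### Theories, provability predicates, arithmetical interpretations -/

/-- `Tax` is primitive recursively axiomatized (via the Gödel numbering). -/
def PrAxiomatized (Tax : Set AFml) : Prop :=
  ∃ p : ℕ → Bool, Primrec p ∧ ∀ φ : AFml, φ ∈ Tax ↔ p φ.code = true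

/-- `Σ₁`-soundness: every `T`-provable `Σ₁` sentence is true in `ℕ`. -/
def Sigma1Sound (Tax : Set AFml) : Prop :=
  ∀ φ : AFml, IsSigma1 φ → φ.FreeLt 0 → Proves Tax φ → TrueN φ

/-- `P` is a provability predicate of `T`: a formula `P(x)` with at most the free
variable `x` such that for every formula `φ`, `T ⊢ φ` iff `PA ⊢ P(⌜φ⌝)`. -/
def IsProvPred (Tax : Set AFml) (P : AFml) : Prop :=
  P.FreeLt 1 ∧ ∀ φ : AFml, Proves Tax φ ↔ Proves PA (P.appNum φ)

/-- `f` is an arithmetical interpretation based on the predicate `P`. -/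
def IsInterp (P : AFml) (f : MFml → AFml) : Prop :=
  (∀ i, (f (.var i)).FreeLt 0) ∧
  f .bot = botFml ∧
  (∀ A, f (.neg A) = .neg (f A)) ∧
  (∀ A B, f (.and A B) = .and (f A) (f B)) ∧
  (∀ A B, f (.or A B) = .or (f A) (f B)) ∧
  (∀ A B, f (.imp A B) = .imp (f A) (f B)) ∧
  (∀ A, f (.box A) = P.appNum (f A))

/-- The provability logic of the predicate `P` (relative to the theory `Tax`). -/
def PL (Tax : Set AFml) (P : AFml) : Set MFml :=
  {A | ∀ f : MFml → AFml, IsInterp P f → Proves Tax (f A)}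

/-- The formulas with a `T`-proof of code `≤ s` (relative to a proof enumeration `prf`). -/
def PTset (prf : ℕ → Option AFml) (s : ℕ) : Set AFml :=
  {φ | ∃ y ≤ s, prf y = some φ}


/-! ### Auxiliary syntactic lemmas -/

@[simp] lemma numeral_lift (c n : ℕ) : (numeral n).lift c = numeral n := by
  induction n with
  | zero => rfl
  | succ n ih => simp [numeral, ATerm.lift, ih]

@[simp] lemma numeral_substAll (σ : ℕ → ATerm) (n : ℕ) :
    (numeral n).substAll σ = numeral n := by
  induction n with
  | zero => rfl
  | succ n ih => simp [numeral, ATerm.substAll, ih]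

lemma ATerm.substAll_congr {σ τ : ℕ → ATerm} (h : ∀ n, σ n = τ n) (t : ATerm) :
    t.substAll σ = t.substAll τ := by
  induction t with
  | var n => exact h n
  | zero => rfl
  | succ t ih => simp [ATerm.substAll, ih]
  | add t s iht ihs => simp [ATerm.substAll, iht, ihs]
  | mul t s iht ihs => simp [ATerm.substAll, iht, ihs]

lemma AFml.substAll_congr {σ τ : ℕ → ATerm} (h : ∀ n, σ n = τ n) (φ : AFml) :
    φ.substAll σ = φ.substAll τ := by
  induction φ generalizing σ τ with
  | eq t s => simp [AFml.substAll, ATerm.substAll_congr h]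
  | le t s => simp [AFml.substAll, ATerm.substAll_congr h]
  | neg φ ih => simp [AFml.substAll, ih h]
  | and φ ψ ih1 ih2 => simp [AFml.substAll, ih1 h, ih2 h]
  | or φ ψ ih1 ih2 => simp [AFml.substAll, ih1 h, ih2 h]
  | imp φ ψ ih1 ih2 => simp [AFml.substAll, ih1 h, ih2 h]
  | all φ ih =>
      exact congrArg AFml.all (ih fun n => by
        cases n with | zero => rfl | succ n => simp [liftSub, h n])
  | ex φ ih =>
      exact congrArg AFml.ex (ih fun n => by
        cases n with | zero => rfl | succ n => simp [liftSub, h n])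

/-- `lift 0` then substitute for var 0: identity. -/
lemma ATerm.lift_substAll_subst0 (t s : ATerm) :
    (t.lift 0).substAll (subst0Env s) = t := by
  induction t with
  | var n => simp [ATerm.lift, ATerm.substAll, subst0Env]
  | zero => rfl
  | succ t ih => simp [ATerm.lift, ATerm.substAll, ih]
  | add t r iht ihr => simp [ATerm.lift, ATerm.substAll, iht, ihr]
  | mul t r iht ihr => simp [ATerm.lift, ATerm.substAll, iht, ihr]

lemma ATerm.lift_substAll_liftSub (t : ATerm) (σ : ℕ → ATerm) :
    (t.lift 0).substAll (liftSub σ) = (t.substAll σ).lift 0 := by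
  induction t with
  | var n => simp [ATerm.lift, ATerm.substAll, liftSub]
  | zero => rfl
  | succ t ih => simp [ATerm.lift, ATerm.substAll, ih]
  | add t r iht ihr => simp [ATerm.lift, ATerm.substAll, iht, ihr]
  | mul t r iht ihr => simp [ATerm.lift, ATerm.substAll, iht, ihr]

lemma ATerm.substAll_substAll (t : ATerm) (σ τ : ℕ → ATerm) :
    (t.substAll σ).substAll τ = t.substAll (fun n => (σ n).substAll τ) := by
  induction t with
  | var n => rfl
  | zero => rfl
  | succ t ih => simp [ATerm.substAll, ih]
  | add t r iht ihr => simp [ATerm.substAll, iht, ihr]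
  | mul t r iht ihr => simp [ATerm.substAll, iht, ihr]

lemma AFml.substAll_substAll (φ : AFml) (σ τ : ℕ → ATerm) :
    (φ.substAll σ).substAll τ = φ.substAll (fun n => (σ n).substAll τ) := by
  induction φ generalizing σ τ with
  | eq t s => simp [AFml.substAll, ATerm.substAll_substAll]
  | le t s => simp [AFml.substAll, ATerm.substAll_substAll]
  | neg φ ih => simp [AFml.substAll, ih]
  | and φ ψ ih1 ih2 => simp [AFml.substAll, ih1, ih2]
  | or φ ψ ih1 ih2 => simp [AFml.substAll, ih1, ih2]
  | imp φ ψ ih1 ih2 => simp [AFml.substAll, ih1, ih2]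
  | all φ ih =>
      simp only [AFml.substAll, ih]
      congr 1
      apply AFml.substAll_congr
      intro n
      cases n with
      | zero => rfl
      | succ n => simp [liftSub, ATerm.lift_substAll_liftSub]
  | ex φ ih =>
      simp only [AFml.substAll, ih]
      congr 1
      apply AFml.substAll_congr
      intro n
      cases n with
      | zero => rfl
      | succ n => simp [liftSub, ATerm.lift_substAll_liftSub]

lemma ATerm.substAll_id_of_freeLt {σ : ℕ → ATerm} {c : ℕ}
    (h : ∀ n < c, σ n = .var n) {t : ATerm} (hf : t.FreeLt c) :
    t.substAll σ = t := by
  induction t with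
  | var n => exact h n hf
  | zero => rfl
  | succ t ih => simp [ATerm.substAll, ih hf]
  | add t r iht ihr => simp [ATerm.substAll, iht hf.1, ihr hf.2]
  | mul t r iht ihr => simp [ATerm.substAll, iht hf.1, ihr hf.2]

lemma AFml.substAll_id_of_freeLt {σ : ℕ → ATerm} {c : ℕ}
    (h : ∀ n < c, σ n = .var n) {φ : AFml} (hf : φ.FreeLt c) :
    φ.substAll σ = φ := by
  induction φ generalizing σ c with
  | eq t s => simp [AFml.substAll, ATerm.substAll_id_of_freeLt h hf.1,
      ATerm.substAll_id_of_freeLt h hf.2]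
  | le t s => simp [AFml.substAll, ATerm.substAll_id_of_freeLt h hf.1,
      ATerm.substAll_id_of_freeLt h hf.2]
  | neg φ ih => simp [AFml.substAll, ih h hf]
  | and φ ψ ih1 ih2 => simp [AFml.substAll, ih1 h hf.1, ih2 h hf.2]
  | or φ ψ ih1 ih2 => simp [AFml.substAll, ih1 h hf.1, ih2 h hf.2]
  | imp φ ψ ih1 ih2 => simp [AFml.substAll, ih1 h hf.1, ih2 h hf.2]
  | all φ ih =>
      simp only [AFml.substAll]
      rw [ih (c := c + 1) ?_ hf]
      intro n hn
      cases n with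
      | zero => rfl
      | succ n => simp [liftSub, h n (by omega), ATerm.lift]
  | ex φ ih =>
      simp only [AFml.substAll]
      rw [ih (c := c + 1) ?_ hf]
      intro n hn
      cases n with
      | zero => rfl
      | succ n => simp [liftSub, h n (by omega), ATerm.lift]

lemma ATerm.freeLt_substAll {σ : ℕ → ATerm} {c : ℕ}
    (h : ∀ n, (σ n).FreeLt c) (t : ATerm) : (t.substAll σ).FreeLt c := by
  induction t with
  | var n => exact h n
  | zero => trivial
  | succ t ih => exact ih
  | add t r iht ihr => exact ⟨iht, ihr⟩
  | mul t r iht ihr => exact ⟨iht, ihr⟩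

@[simp] lemma numeral_freeLt (c n : ℕ) : (numeral n).FreeLt c := by
  induction n with
  | zero => trivial
  | succ n ih => exact ih

lemma ATerm.lift_id_of_freeLt {c : ℕ} {t : ATerm} (hf : t.FreeLt c) :
    t.lift c = t := by
  induction t with
  | var n => simp [ATerm.lift, show n < c from hf]
  | zero => rfl
  | succ t ih => simp [ATerm.lift, ih hf]
  | add t r iht ihr => simp [ATerm.lift, iht hf.1, ihr hf.2]
  | mul t r iht ihr => simp [ATerm.lift, iht hf.1, ihr hf.2]

lemma ATerm.val_lift (t : ATerm) (a : ℕ) (ρ : ℕ → ℕ) :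
    (t.lift 0).val (consEnv a ρ) = t.val ρ := by
  induction t with
  | var n => simp [ATerm.lift, ATerm.val, consEnv]
  | zero => rfl
  | succ t ih => simp [ATerm.lift, ATerm.val, ih]
  | add t r iht ihr => simp [ATerm.lift, ATerm.val, iht, ihr]
  | mul t r iht ihr => simp [ATerm.lift, ATerm.val, iht, ihr]

/-! ### Propositional and equality reasoning over PA -/

attribute [local simp] AFml.subst0 AFml.substAll ATerm.substAll subst0Env liftSub
  ATerm.lift AFml.lift ATerm.lift_substAll_subst0 ATerm.lift_substAll_liftSub

/-- Shorthand for provability in PA. -/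
local notation "Thm" => Proves PA

lemma pax {φ : AFml} (h : PAax φ) : Thm φ := Proves.ax h

lemma tc1 {A B : AFml} (hA : Thm A) (h : ∀ v, A.evalProp v → B.evalProp v) : Thm B :=
  (Proves.taut (φ := .imp A B) h).mp hA

lemma tc2 {A B C : AFml} (hA : Thm A) (hB : Thm B)
    (h : ∀ v, A.evalProp v → B.evalProp v → C.evalProp v) : Thm C :=
  ((Proves.taut (φ := .imp A (.imp B C)) h).mp hA).mp hB

lemma tc3 {A B C D : AFml} (hA : Thm A) (hB : Thm B) (hC : Thm C)
    (h : ∀ v, A.evalProp v → B.evalProp v → C.evalProp v → D.evalProp v) : Thm D :=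
  (((Proves.taut (φ := .imp A (.imp B (.imp C D))) h).mp hA).mp hB).mp hC

lemma tc4 {A B C D E : AFml} (hA : Thm A) (hB : Thm B) (hC : Thm C) (hD : Thm D)
    (h : ∀ v, A.evalProp v → B.evalProp v → C.evalProp v → D.evalProp v → E.evalProp v) :
    Thm E :=
  ((((Proves.taut (φ := .imp A (.imp B (.imp C (.imp D E)))) h).mp hA).mp hB).mp hC).mp hD

lemma allE' {φ : AFml} (t : ATerm) (h : Thm (.all φ)) : Thm (φ.subst0 t) :=
  (Proves.allE φ t).mp h

lemma exI' {φ : AFml} (t : ATerm) (h : Thm (φ.subst0 t)) : Thm (.ex φ) :=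
  (Proves.exI φ t).mp h

/-- `⊢ t = s → s = t`. -/
lemma eqSymF (t s : ATerm) : Thm (.imp (.eq t s) (.eq s t)) := by
  have h := Proves.eqSubst (Γ := PA) (.eq (.var 0) (ATerm.lift 0 t)) t s
  simp only [AFml.subst0, AFml.substAll, ATerm.substAll, subst0Env,
    ATerm.lift_substAll_subst0] at h
  exact tc2 h (Proves.eqRefl t) (fun v a b c => a c b)

/-- `⊢ t = s → (s = r → t = r)`. -/
lemma eqTransF (t s r : ATerm) : Thm (.imp (.eq t s) (.imp (.eq s r) (.eq t r))) := by
  have h := Proves.eqSubst (Γ := PA) (.eq (ATerm.lift 0 t) (.var 0)) s r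
  simp only [AFml.subst0, AFml.substAll, ATerm.substAll, subst0Env,
    ATerm.lift_substAll_subst0] at h
  exact tc1 h (fun v a b c => a c b)

lemma eqTrans' {t s r : ATerm} (h1 : Thm (.eq t s)) (h2 : Thm (.eq s r)) :
    Thm (.eq t r) := ((eqTransF t s r).mp h1).mp h2

lemma eqSym' {t s : ATerm} (h : Thm (.eq t s)) : Thm (.eq s t) := (eqSymF t s).mp h

/-- `⊢ t = s → S t = S s`. -/
lemma congSucc (t s : ATerm) : Thm (.imp (.eq t s) (.eq (.succ t) (.succ s))) := by
  have h := Proves.eqSubst (Γ := PA) (.eq (.succ (ATerm.lift 0 t)) (.succ (.var 0))) t s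
  simp only [AFml.subst0, AFml.substAll, ATerm.substAll, subst0Env,
    ATerm.lift_substAll_subst0] at h
  exact tc2 h (Proves.eqRefl _) (fun v a b c => a c b)

lemma congAddL (t s r : ATerm) :
    Thm (.imp (.eq t s) (.eq (.add t r) (.add s r))) := by
  have h := Proves.eqSubst (Γ := PA)
    (.eq (.add (ATerm.lift 0 t) (ATerm.lift 0 r)) (.add (.var 0) (ATerm.lift 0 r))) t s
  simp only [AFml.subst0, AFml.substAll, ATerm.substAll, subst0Env,
    ATerm.lift_substAll_subst0] at h
  exact tc2 h (Proves.eqRefl _) (fun v a b c => a c b)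

lemma congAddR (t s r : ATerm) :
    Thm (.imp (.eq t s) (.eq (.add r t) (.add r s))) := by
  have h := Proves.eqSubst (Γ := PA)
    (.eq (.add (ATerm.lift 0 r) (ATerm.lift 0 t)) (.add (ATerm.lift 0 r) (.var 0))) t s
  simp only [AFml.subst0, AFml.substAll, ATerm.substAll, subst0Env,
    ATerm.lift_substAll_subst0] at h
  exact tc2 h (Proves.eqRefl _) (fun v a b c => a c b)

lemma congMulL (t s r : ATerm) :
    Thm (.imp (.eq t s) (.eq (.mul t r) (.mul s r))) := by
  have h := Proves.eqSubst (Γ := PA)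
    (.eq (.mul (ATerm.lift 0 t) (ATerm.lift 0 r)) (.mul (.var 0) (ATerm.lift 0 r))) t s
  simp only [AFml.subst0, AFml.substAll, ATerm.substAll, subst0Env,
    ATerm.lift_substAll_subst0] at h
  exact tc2 h (Proves.eqRefl _) (fun v a b c => a c b)

lemma congMulR (t s r : ATerm) :
    Thm (.imp (.eq t s) (.eq (.mul r t) (.mul r s))) := by
  have h := Proves.eqSubst (Γ := PA)
    (.eq (.mul (ATerm.lift 0 r) (ATerm.lift 0 t)) (.mul (ATerm.lift 0 r) (.var 0))) t s
  simp only [AFml.subst0, AFml.substAll, ATerm.substAll, subst0Env,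
    ATerm.lift_substAll_subst0] at h
  exact tc2 h (Proves.eqRefl _) (fun v a b c => a c b)

/-- `⊢ t = s → (r ≤ t → r ≤ s)`. -/
lemma leSubstR (t s r : ATerm) :
    Thm (.imp (.eq t s) (.imp (.le r t) (.le r s))) := by
  have h := Proves.eqSubst (Γ := PA) (.le (ATerm.lift 0 r) (.var 0)) t s
  simp only [AFml.subst0, AFml.substAll, ATerm.substAll, subst0Env,
    ATerm.lift_substAll_subst0] at h
  exact h

/-- `⊢ t = s → (t ≤ r → s ≤ r)`. -/
lemma leSubstL (t s r : ATerm) :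
    Thm (.imp (.eq t s) (.imp (.le t r) (.le s r))) := by
  have h := Proves.eqSubst (Γ := PA) (.le (.var 0) (ATerm.lift 0 r)) t s
  simp only [AFml.subst0, AFml.substAll, ATerm.substAll, subst0Env,
    ATerm.lift_substAll_subst0] at h
  exact h

/-- `⊢ t = s → (r = t → r = s)`. -/
lemma eqSubstR (t s r : ATerm) :
    Thm (.imp (.eq t s) (.imp (.eq r t) (.eq r s))) := by
  have h := Proves.eqSubst (Γ := PA) (.eq (ATerm.lift 0 r) (.var 0)) t s
  simp only [AFml.subst0, AFml.substAll, ATerm.substAll, subst0Env,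
    ATerm.lift_substAll_subst0] at h
  exact h

/-! ### Existential elimination and numeral arithmetic in PA -/

lemma exElim {ψ χ : AFml} (h : Thm (.all (.imp ψ (AFml.lift 0 χ)))) :
    Thm (.imp (.ex ψ) χ) := by
  have hcontra : Thm (.all (.imp (.neg (AFml.lift 0 χ)) (.neg ψ))) := by
    have htaut : Thm (.all (.imp (.imp ψ (AFml.lift 0 χ))
        (.imp (.neg (AFml.lift 0 χ)) (.neg ψ)))) :=
      Proves.gen (Proves.taut (fun v a b c => b (a c)))
    exact ((Proves.allImp _ _).mp htaut).mp h
  have h2 : Thm (.imp (.all (.neg (AFml.lift 0 χ))) (.all (.neg ψ))) :=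
    (Proves.allImp _ _).mp hcontra
  have h3 : Thm (.imp (.neg χ) (.all (.neg (AFml.lift 0 χ)))) := by
    have := Proves.vacAll (Γ := PA) (.neg χ)
    simpa [AFml.lift] using this
  have h4 := Proves.exDef (Γ := PA) ψ
  exact tc3 h3 h2 h4 (fun v a b c e =>
    Classical.byContradiction (fun hc => c.1 e (b (a hc))))

lemma addNum (a b : ℕ) : Thm (.eq (.add (numeral a) (numeral b)) (numeral (a + b))) := by
  induction b with
  | zero =>
    have h := allE' (numeral a) (pax PAax.addZero)
    simpa [numeral] using h
  | succ b ih =>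
    have h1 := allE' (numeral b) (allE' (numeral a) (pax PAax.addSucc))
    simp [AFml.subst0, AFml.substAll, ATerm.substAll, subst0Env, liftSub,
      numeral_lift, numeral_substAll, ATerm.lift, reduceIte] at h1
    have h2 := (congSucc (.add (numeral a) (numeral b)) (numeral (a + b))).mp ih
    exact eqTrans' h1 h2

lemma mulNum (a b : ℕ) : Thm (.eq (.mul (numeral a) (numeral b)) (numeral (a * b))) := by
  induction b with
  | zero =>
    have h := allE' (numeral a) (pax PAax.mulZero)
    simpa [numeral] using h
  | succ b ih =>
    have h1 := allE' (numeral b) (allE' (numeral a) (pax PAax.mulSucc))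
    simp [AFml.subst0, AFml.substAll, ATerm.substAll, subst0Env, liftSub,
      numeral_lift, numeral_substAll, ATerm.lift, reduceIte] at h1
    -- h1 : ā * S b̄ = ā * b̄ + ā
    have h2 := (congAddL (.mul (numeral a) (numeral b)) (numeral (a * b)) (numeral a)).mp ih
    have h3 := addNum (a * b) a
    have : a * b + a = a * (b + 1) := by ring
    rw [this] at h3
    exact eqTrans' h1 (eqTrans' h2 h3)

lemma leNum {a b : ℕ} (h : a ≤ b) : Thm (.le (numeral a) (numeral b)) := by
  have hld := allE' (numeral b) (allE' (numeral a) (pax PAax.leDef))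
  simp [iffF, AFml.subst0, AFml.substAll, ATerm.substAll, subst0Env, liftSub,
    numeral_lift, numeral_substAll, ATerm.lift, reduceIte] at hld
  have hw : Thm ((AFml.eq (.add (.var 0) (numeral a)) (numeral b)).subst0 (numeral (b - a))) := by
    simp [AFml.subst0, AFml.substAll, ATerm.substAll, subst0Env, numeral_substAll]
    have h3 := addNum (b - a) a
    rwa [Nat.sub_add_cancel h] at h3
  exact tc2 hld (exI' _ hw) (fun v i e => i.2 e)

lemma neNum : ∀ a b : ℕ, a ≠ b → Thm (.neg (.eq (numeral a) (numeral b)))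
  | 0, 0, h => absurd rfl h
  | 0, b + 1, _ => by
    have h1 := allE' (numeral b) (pax PAax.succNeZero)
    simp [AFml.subst0, AFml.substAll, ATerm.substAll, subst0Env,
      numeral_substAll] at h1
    exact tc2 (eqSymF .zero (.succ (numeral b))) h1 (fun v f n g => n (f g))
  | a + 1, 0, _ => by
    have h1 := allE' (numeral a) (pax PAax.succNeZero)
    simp [AFml.subst0, AFml.substAll, ATerm.substAll, subst0Env,
      numeral_substAll] at h1
    exact h1
  | a + 1, b + 1, h => by
    have ih := neNum a b (by omega)
    have hinj := allE' (numeral b) (allE' (numeral a) (pax PAax.succInj))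
    simp [AFml.subst0, AFml.substAll, ATerm.substAll, subst0Env, liftSub,
      numeral_lift, numeral_substAll, ATerm.lift, reduceIte] at hinj
    exact tc2 hinj ih (fun v f n g => n (f g))

lemma notAddEq : ∀ b a : ℕ, b < a →
    Thm (.all (.neg (.eq (.add (.var 0) (numeral a)) (numeral b))))
  | 0, 0, h => absurd h (by omega)
  | b + 1, 0, h => absurd h (by omega)
  | 0, a + 1, _ => by
    have h1 := allE' (numeral a) (allE' (.var 0) (pax PAax.addSucc))
    simp [AFml.subst0, AFml.substAll, ATerm.substAll, subst0Env, liftSub,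
      numeral_lift, numeral_substAll, ATerm.lift, reduceIte] at h1
    have h2 := allE' (.add (.var 0) (numeral a)) (pax PAax.succNeZero)
    simp [AFml.subst0, AFml.substAll, ATerm.substAll, subst0Env,
      numeral_substAll] at h2
    refine Proves.gen ?_
    have hYX := (eqSymF _ _).mp h1
    have htr := (eqTransF (.succ (.add (.var 0) (numeral a))) (.add (.var 0) (.succ (numeral a))) .zero).mp hYX
    exact tc2 htr h2 (fun v a b hx => b (a hx))
  | b + 1, a + 1, h => by
    have ih := notAddEq b a (by omega)
    have ihI := allE' (.var 0) ih
    simp [AFml.subst0, AFml.substAll, ATerm.substAll, subst0Env,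
      numeral_substAll] at ihI
    have h1 := allE' (numeral a) (allE' (.var 0) (pax PAax.addSucc))
    simp [AFml.subst0, AFml.substAll, ATerm.substAll, subst0Env, liftSub,
      numeral_lift, numeral_substAll, ATerm.lift, reduceIte] at h1
    have hinj := allE' (numeral b) (allE' (.add (.var 0) (numeral a)) (pax PAax.succInj))
    simp [AFml.subst0, AFml.substAll, ATerm.substAll, subst0Env, liftSub,
      numeral_lift, numeral_substAll, ATerm.lift, reduceIte] at hinj
    refine Proves.gen ?_
    have hYX := (eqSymF _ _).mp h1
    have htr := (eqTransF (.succ (.add (.var 0) (numeral a))) (.add (.var 0) (.succ (numeral a))) (.succ (numeral b))).mp hYX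
    exact tc3 htr hinj ihI (fun v a b c hx => c (b (a hx)))

lemma nleNum {a b : ℕ} (h : b < a) : Thm (.neg (.le (numeral a) (numeral b))) := by
  have hld := allE' (numeral b) (allE' (numeral a) (pax PAax.leDef))
  simp [iffF, AFml.subst0, AFml.substAll, ATerm.substAll, subst0Env, liftSub,
    numeral_lift, numeral_substAll, ATerm.lift, reduceIte] at hld
  have hall := notAddEq b a h
  have hexd := Proves.exDef (Γ := PA) (.eq (.add (.var 0) (numeral a)) (numeral b))
  exact tc3 hld hall hexd (fun v i hal ed hle => ed.1 (i.1 hle) hal)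

/-! ### More tautological-consequence helpers -/

lemma tc5 {A B C D E F : AFml} (hA : Thm A) (hB : Thm B) (hC : Thm C) (hD : Thm D)
    (hE : Thm E)
    (h : ∀ v, A.evalProp v → B.evalProp v → C.evalProp v → D.evalProp v → E.evalProp v →
      F.evalProp v) : Thm F :=
  (((((Proves.taut (φ := .imp A (.imp B (.imp C (.imp D (.imp E F))))) h).mp
    hA).mp hB).mp hC).mp hD).mp hE

lemma tc6 {A B C D E F G : AFml} (hA : Thm A) (hB : Thm B) (hC : Thm C) (hD : Thm D)
    (hE : Thm E) (hF : Thm F)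
    (h : ∀ v, A.evalProp v → B.evalProp v → C.evalProp v → D.evalProp v → E.evalProp v →
      F.evalProp v → G.evalProp v) : Thm G :=
  ((((((Proves.taut (φ := .imp A (.imp B (.imp C (.imp D (.imp E (.imp F G)))))) h).mp
    hA).mp hB).mp hC).mp hD).mp hE).mp hF

lemma tc7 {A B C D E F G H : AFml} (hA : Thm A) (hB : Thm B) (hC : Thm C) (hD : Thm D)
    (hE : Thm E) (hF : Thm F) (hG : Thm G)
    (h : ∀ v, A.evalProp v → B.evalProp v → C.evalProp v → D.evalProp v → E.evalProp v →
      F.evalProp v → G.evalProp v → H.evalProp v) : Thm H :=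
  (((((((Proves.taut
    (φ := .imp A (.imp B (.imp C (.imp D (.imp E (.imp F (.imp G H))))))) h).mp
    hA).mp hB).mp hC).mp hD).mp hE).mp hF).mp hG

lemma impComp {A B C : AFml} (h1 : Thm (.imp A B)) (h2 : Thm (.imp B C)) :
    Thm (.imp A C) := tc2 h1 h2 (fun v f g a => g (f a))

/-! ### Zero-or-successor, and the bounded case-split lemma -/

/-- `x = 0 ∨ ∃ y, x = S y`, internally. -/
lemma zeroOrSucc :
    Thm (.all (.or (.eq (.var 0) .zero) (.ex (.eq (.var 1) (.succ (.var 0)))))) := by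
  set ZS : AFml := .or (.eq (.var 0) .zero) (.ex (.eq (.var 1) (.succ (.var 0)))) with hZS
  have hind := pax (PAax.ind ZS)
  have hz : Thm (ZS.subst0 .zero) := by
    rw [hZS]
    simp [AFml.subst0, AFml.substAll, ATerm.substAll, subst0Env, liftSub, ATerm.lift]
    exact tc1 (Proves.eqRefl .zero) (fun v h => Or.inl h)
  have hs : Thm (.all (.imp ZS (succSubst ZS))) := by
    have hstep : Thm (succSubst ZS) := by
      rw [hZS]
      simp [succSubst, AFml.substAll, ATerm.substAll, liftSub, ATerm.lift]
      have hw : Thm ((AFml.eq (.succ (.var 1)) (.succ (.var 0))).subst0 (.var 0)) := by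
        simp [AFml.subst0, AFml.substAll, ATerm.substAll, subst0Env]
        exact Proves.eqRefl _
      exact tc1 (exI' _ hw) (fun v h => Or.inr h)
    exact Proves.gen (tc1 hstep (fun v h _ => h))
  exact tc3 hz hs hind (fun v a b i => i ⟨a, b⟩)

/-- `⊢ ∀x (x ≤ 0 → x = 0)`. -/
lemma leZeroCase : Thm (.all (.imp (.le (.var 0) .zero) (.eq (.var 0) .zero))) := by
  -- x ≤ 0 ↔ ∃z, z + x = 0
  have hle := allE' .zero (allE' (.var 0) (pax PAax.leDef))
  simp [iffF, AFml.subst0, AFml.substAll, ATerm.substAll, subst0Env, liftSub,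
    ATerm.lift] at hle
  -- inner matrix: z + x = 0 → x = 0  (frees: z = var 0, x = var 1)
  have inner1 : Thm (.all (.imp (.eq (.var 2) (.succ (.var 0)))
      (.neg (.eq (.add (.var 1) (.var 2)) .zero)))) := by
    have h1 := allE' (.var 0) (allE' (.var 1) (pax PAax.addSucc))
    simp [AFml.subst0, AFml.substAll, ATerm.substAll, subst0Env, liftSub, ATerm.lift] at h1
    -- h1 : z + S y = S (z + y)  (z = var 1, y = var 0)
    have h2 := allE' (.add (.var 1) (.var 0)) (pax PAax.succNeZero)
    simp [AFml.subst0, AFml.substAll, ATerm.substAll, subst0Env] at h2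
    have hcong := congAddR (.var 2) (.succ (.var 0)) (.var 1)
    have htr1 := eqTransF (.add (.var 1) (.var 2)) (.add (.var 1) (.succ (.var 0)))
      (.succ (.add (.var 1) (.var 0)))
    have hsym := eqSymF (.add (.var 1) (.var 2)) (.succ (.add (.var 1) (.var 0)))
    have htr2 := eqTransF (.succ (.add (.var 1) (.var 0))) (.add (.var 1) (.var 2)) .zero
    refine Proves.gen ?_
    exact tc6 hcong h1 h2 htr1 hsym htr2
      (fun v c1 e2 n2 t1 s1 t2 hx h0 => n2 (t2 (s1 (t1 (c1 hx) e2)) h0))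
  have hex2 : Thm (.imp (.ex (.eq (.var 2) (.succ (.var 0))))
      (.neg (.eq (.add (.var 0) (.var 1)) .zero))) := by
    have := exElim (ψ := .eq (.var 2) (.succ (.var 0)))
      (χ := .neg (.eq (.add (.var 0) (.var 1)) .zero)) ?_
    · exact this
    · simpa [AFml.lift, ATerm.lift] using inner1
  have hzs := allE' (.var 1) zeroOrSucc
  simp [AFml.subst0, AFml.substAll, ATerm.substAll, subst0Env, liftSub, ATerm.lift] at hzs
  have matrix2 : Thm (.imp (.eq (.add (.var 0) (.var 1)) .zero) (.eq (.var 1) .zero)) :=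
    tc2 hzs hex2 (fun v zs f hadd => zs.elim id (fun hex => absurd hadd (f hex)))
  have hA := exElim (ψ := .eq (.add (.var 0) (.var 1)) .zero) (χ := .eq (.var 0) .zero)
    (by simpa [AFml.lift, ATerm.lift] using Proves.gen matrix2)
  exact Proves.gen (tc2 hle hA (fun v i f hle0 => f (i.1 hle0)))

/-- Case formula: `t = 0 ∨ t = 1 ∨ ⋯ ∨ t = n`. -/
def casesAt (t : ATerm) : ℕ → AFml
  | 0 => .eq t (numeral 0)
  | n + 1 => .or (casesAt t n) (.eq t (numeral (n + 1)))

@[simp] lemma casesAt_substAll (t : ATerm) (σ : ℕ → ATerm) :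
    ∀ n, (casesAt t n).substAll σ = casesAt (t.substAll σ) n
  | 0 => by simp [casesAt, AFml.substAll, numeral]
  | n + 1 => by simp [casesAt, AFml.substAll, numeral, casesAt_substAll t σ n]

@[simp] lemma casesAt_lift (t : ATerm) (c : ℕ) :
    ∀ n, (casesAt t n).lift c = casesAt (t.lift c) n
  | 0 => by simp [casesAt, AFml.lift, numeral]
  | n + 1 => by simp [casesAt, AFml.lift, numeral, casesAt_lift t c n]

lemma casesInAt (t : ATerm) : ∀ {i n : ℕ}, i ≤ n →
    Thm (.imp (.eq t (numeral i)) (casesAt t n))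
  | i, 0, h => by
    have : i = 0 := by omega
    subst this
    exact Proves.taut (fun v a => a)
  | i, n + 1, h => by
    by_cases hi : i ≤ n
    · exact tc1 (casesInAt t hi) (fun v f a => Or.inl (f a))
    · have : i = n + 1 := by omega
      subst this
      exact Proves.taut (fun v a => Or.inr a)

lemma casesElim {φ : AFml} {t : ATerm} : ∀ {n : ℕ},
    (∀ i ≤ n, Thm (.imp (.eq t (numeral i)) φ)) → Thm (.imp (casesAt t n) φ)
  | 0, h => h 0 le_rfl
  | n + 1, h => by
    have ih := casesElim (t := t) (n := n) (fun i hi => h i (by omega))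
    exact tc2 ih (h (n + 1) le_rfl) (fun v f g c => c.elim f g)

/-- From `x = S y` and the cases for `y ≤ n`, get the cases for `x ≤ n+1`;
here `y = var 1`, `x = var 2`. -/
lemma casesSucc : ∀ n : ℕ, Thm (.imp (casesAt (.var 1) n)
    (.imp (.eq (.var 2) (.succ (.var 1))) (casesAt (.var 2) (n + 1))))
  | 0 => by
    have hc := congSucc (.var 1) (numeral 0)
    have htr := eqTransF (.var 2) (.succ (.var 1)) (.succ (numeral 0))
    exact tc2 hc htr (fun v c t hy hx => Or.inr (t hx (c hy)))
  | n + 1 => by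
    have ih := casesSucc n
    have hc := congSucc (.var 1) (numeral (n + 1))
    have htr := eqTransF (.var 2) (.succ (.var 1)) (.succ (numeral (n + 1)))
    exact tc3 ih hc htr (fun v f c t hy hx =>
      hy.elim (fun h1 => Or.inl (f h1 hx)) (fun h2 => Or.inr (t hx (c h2))))

/-- The bounded case-split lemma: `⊢ ∀x (x ≤ n̄ → (x = 0̄ ∨ ⋯ ∨ x = n̄))`. -/
lemma caseLemma : ∀ n : ℕ, Thm (.all (.imp (.le (.var 0) (numeral n)) (casesAt (.var 0) n)))
  | 0 => by
    have h := leZeroCase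
    exact h
  | n + 1 => by
    have IH := caseLemma n
    -- matrixZ, frees: z = var 0, y = var 1, x = var 2
    have p1 := congAddR (.var 2) (.succ (.var 1)) (.var 0)
    have p2 : Thm (.eq (.add (.var 0) (.succ (.var 1))) (.succ (.add (.var 0) (.var 1)))) := by
      have h := allE' (.var 1) (allE' (.var 0) (pax PAax.addSucc))
      simpa [AFml.subst0, AFml.substAll, ATerm.substAll, subst0Env, liftSub, ATerm.lift]
        using h
    have p2s := eqSym' p2
    have symF1 := eqSymF (.add (.var 0) (.var 2)) (.add (.var 0) (.succ (.var 1)))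
    have tr1 := eqTransF (.succ (.add (.var 0) (.var 1))) (.add (.var 0) (.succ (.var 1)))
      (.add (.var 0) (.var 2))
    have tr2 := eqTransF (.succ (.add (.var 0) (.var 1))) (.add (.var 0) (.var 2))
      (.succ (numeral n))
    have inj : Thm (.imp (.eq (.succ (.add (.var 0) (.var 1))) (.succ (numeral n)))
        (.eq (.add (.var 0) (.var 1)) (numeral n))) := by
      have h := allE' (numeral n) (allE' (.add (.var 0) (.var 1)) (pax PAax.succInj))
      simpa [AFml.subst0, AFml.substAll, ATerm.substAll, subst0Env, liftSub, ATerm.lift]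
        using h
    have wEx : Thm (.imp (.eq (.add (.var 0) (.var 1)) (numeral n))
        (.ex (.eq (.add (.var 0) (.var 2)) (numeral n)))) := by
      have h := Proves.exI (Γ := PA) (.eq (.add (.var 0) (.var 2)) (numeral n)) (.var 0)
      simpa [AFml.subst0, AFml.substAll, ATerm.substAll, subst0Env] using h
    have ldY : Thm (.imp (.ex (.eq (.add (.var 0) (.var 2)) (numeral n)))
        (.le (.var 1) (numeral n))) := by
      have h := allE' (numeral n) (allE' (.var 1) (pax PAax.leDef))
      simp [iffF, AFml.subst0, AFml.substAll, ATerm.substAll, subst0Env, liftSub,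
        ATerm.lift] at h
      exact tc1 h (fun v i => i.2)
    have caseY : Thm (.imp (.le (.var 1) (numeral n)) (casesAt (.var 1) n)) := by
      have h := allE' (.var 1) IH
      simpa [AFml.subst0, AFml.substAll, ATerm.substAll, subst0Env] using h
    have chain1 := impComp inj (impComp wEx (impComp ldY caseY))
    have csucc := casesSucc n
    have matrixZ : Thm (.imp (.eq (.add (.var 0) (.var 2)) (numeral (n + 1)))
        (.imp (.eq (.var 2) (.succ (.var 1))) (casesAt (.var 2) (n + 1)))) := by
      exact tc7 p1 p2s symF1 tr1 tr2 chain1 csucc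
        (fun v h1 hs2 hsym ht1 ht2 hch hcs hzx hxy =>
          hcs (hch (ht2 (ht1 hs2 (hsym (h1 hxy))) hzx)) hxy)
    have hexZ := exElim (ψ := .eq (.add (.var 0) (.var 2)) (numeral (n + 1)))
      (χ := .imp (.eq (.var 1) (.succ (.var 0))) (casesAt (.var 1) (n + 1)))
      (by simpa [AFml.lift, ATerm.lift] using Proves.gen matrixZ)
    have c1matrix : Thm (.imp (.eq (.var 1) (.succ (.var 0)))
        (.imp (.ex (.eq (.add (.var 0) (.var 2)) (numeral (n + 1)))) (casesAt (.var 1) (n + 1)))) :=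
      tc1 hexZ (fun v f a b => f b a)
    have c1 := exElim (ψ := .eq (.var 1) (.succ (.var 0)))
      (χ := .imp (.ex (.eq (.add (.var 0) (.var 1)) (numeral (n + 1)))) (casesAt (.var 0) (n + 1)))
      (by simpa [AFml.lift, ATerm.lift] using Proves.gen c1matrix)
    have hle : Thm (iffF (.le (.var 0) (numeral (n + 1)))
        (.ex (.eq (.add (.var 0) (.var 1)) (numeral (n + 1))))) := by
      have h := allE' (numeral (n + 1)) (allE' (.var 0) (pax PAax.leDef))
      simpa [iffF, AFml.subst0, AFml.substAll, ATerm.substAll, subst0Env, liftSub,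
        ATerm.lift] using h
    have hzs := allE' (.var 0) zeroOrSucc
    simp [AFml.subst0, AFml.substAll, ATerm.substAll, subst0Env, liftSub, ATerm.lift] at hzs
    have c0 : Thm (.imp (.eq (.var 0) .zero) (casesAt (.var 0) (n + 1))) :=
      casesInAt (.var 0) (Nat.zero_le (n + 1))
    exact Proves.gen (tc4 hle hzs c0 c1
      (fun v i zs h0 h1 hx => zs.elim h0 (fun he => h1 he (i.1 hx))))

/-! ### Σ₁-completeness of PA -/

/-- Environment of numerals. -/
def numEnv (ρ : ℕ → ℕ) : ℕ → ATerm := fun n => numeral (ρ n)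

lemma termEval (t : ATerm) (ρ : ℕ → ℕ) :
    Thm (.eq (t.substAll (numEnv ρ)) (numeral (t.val ρ))) := by
  induction t with
  | var n => exact Proves.eqRefl _
  | zero => exact Proves.eqRefl _
  | succ t ih => exact (congSucc _ _).mp ih
  | add t s ih1 ih2 =>
    exact eqTrans' (eqTrans' ((congAddL _ _ _).mp ih1) ((congAddR _ _ _).mp ih2))
      (addNum (t.val ρ) (s.val ρ))
  | mul t s ih1 ih2 =>
    exact eqTrans' (eqTrans' ((congMulL _ _ _).mp ih1) ((congMulR _ _ _).mp ih2))
      (mulNum (t.val ρ) (s.val ρ))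

lemma ATerm.freeLt_lift0 {c : ℕ} {t : ATerm} (h : t.FreeLt c) :
    (t.lift 0).FreeLt (c + 1) := by
  induction t with
  | var n => simpa [ATerm.lift, ATerm.FreeLt] using h
  | zero => trivial
  | succ t ih => exact ih h
  | add t s ih1 ih2 => exact ⟨ih1 h.1, ih2 h.2⟩
  | mul t s ih1 ih2 => exact ⟨ih1 h.1, ih2 h.2⟩

lemma AFml.freeLt_substAll {σ : ℕ → ATerm} {c : ℕ}
    (h : ∀ n, (σ n).FreeLt c) (φ : AFml) : (φ.substAll σ).FreeLt c := by
  induction φ generalizing σ c with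
  | eq t s => exact ⟨ATerm.freeLt_substAll h t, ATerm.freeLt_substAll h s⟩
  | le t s => exact ⟨ATerm.freeLt_substAll h t, ATerm.freeLt_substAll h s⟩
  | neg φ ih => exact ih h
  | and φ ψ ih1 ih2 => exact ⟨ih1 h, ih2 h⟩
  | or φ ψ ih1 ih2 => exact ⟨ih1 h, ih2 h⟩
  | imp φ ψ ih1 ih2 => exact ⟨ih1 h, ih2 h⟩
  | all φ ih =>
    refine ih (σ := liftSub σ) (c := c + 1) ?_
    intro n; cases n with
    | zero => exact Nat.succ_pos c
    | succ n => exact ATerm.freeLt_lift0 (h n)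
  | ex φ ih =>
    refine ih (σ := liftSub σ) (c := c + 1) ?_
    intro n; cases n with
    | zero => exact Nat.succ_pos c
    | succ n => exact ATerm.freeLt_lift0 (h n)

lemma subst0_var0 {φ : AFml} (h : φ.FreeLt 1) : φ.subst0 (.var 0) = φ :=
  AFml.substAll_id_of_freeLt (c := 1) (fun n hn => by interval_cases n; rfl) h

/-- Composition: substituting a numeral for `var 0` after pushing `numEnv ρ`
under a binder. -/
lemma subst_numEnv_cons (φ : AFml) (ρ : ℕ → ℕ) (i : ℕ) :
    (φ.substAll (liftSub (numEnv ρ))).subst0 (numeral i) =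
      φ.substAll (numEnv (consEnv i ρ)) := by
  rw [AFml.subst0, AFml.substAll_substAll]
  apply AFml.substAll_congr
  intro n
  cases n with
  | zero => rfl
  | succ n => simp [liftSub, numEnv, consEnv]

lemma freeLt1_substAll_liftSub (φ : AFml) (ρ : ℕ → ℕ) :
    (φ.substAll (liftSub (numEnv ρ))).FreeLt 1 := by
  apply AFml.freeLt_substAll
  intro n; cases n with
  | zero => exact Nat.one_pos
  | succ n => simp [liftSub, numEnv, ATerm.FreeLt]

/-- Transfer a proof of `φ(ī)` to `⊢ x = ī → φ(x)` for `φ` with one free variable. -/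
lemma eqCaseImp {φ : AFml} (hf : φ.FreeLt 1) {i : ℕ} (hi : Thm (φ.subst0 (numeral i))) :
    Thm (.imp (.eq (.var 0) (numeral i)) φ) := by
  have hsub := Proves.eqSubst (Γ := PA) φ (numeral i) (.var 0)
  rw [subst0_var0 hf] at hsub
  have hsym := eqSymF (.var 0) (numeral i)
  exact tc3 hsub hsym hi (fun v f s h' hx => f (s hx) h')

lemma eqCaseImpNeg {φ : AFml} (hf : φ.FreeLt 1) {i : ℕ}
    (hi : Thm (.neg (φ.subst0 (numeral i)))) :
    Thm (.imp (.eq (.var 0) (numeral i)) (.neg φ)) := by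
  have hsub := Proves.eqSubst (Γ := PA) (.neg φ) (numeral i) (.var 0)
  have heq : (AFml.neg φ).subst0 (.var 0) = .neg φ := by
    simp only [AFml.subst0, AFml.substAll]
    rw [show (φ.substAll (subst0Env (.var 0))) = φ from subst0_var0 hf]
  rw [heq] at hsub
  have hsym := eqSymF (.var 0) (numeral i)
  exact tc3 hsub hsym hi (fun v f s h' hx => f (s hx) h')

/-- Matrix form of the case lemma. -/
lemma caseLemmaM (n : ℕ) :
    Thm (.imp (.le (.var 0) (numeral n)) (casesAt (.var 0) n)) := by
  have h := allE' (.var 0) (caseLemma n)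
  simpa [AFml.subst0, AFml.substAll, ATerm.substAll, subst0Env] using h

/-- Δ₀-completeness: a true Δ₀ formula is provable, a false one refutable. -/
lemma delta0_complete {φ : AFml} (h : IsDelta0 φ) : ∀ ρ : ℕ → ℕ,
    (φ.Sat ρ → Thm (φ.substAll (numEnv ρ))) ∧
    (¬ φ.Sat ρ → Thm (.neg (φ.substAll (numEnv ρ)))) := by
  induction h with
  | eq t s =>
    intro ρ
    have h1 := termEval t ρ
    have h2 := termEval s ρ
    constructor
    · intro hs
      have hv : t.val ρ = s.val ρ := hs
      rw [hv] at h1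
      exact eqTrans' h1 (eqSym' h2)
    · intro hs
      have hne : t.val ρ ≠ s.val ρ := hs
      have hn := neNum _ _ hne
      have symF := eqSymF (t.substAll (numEnv ρ)) (numeral (t.val ρ))
      have tr1 := eqTransF (numeral (t.val ρ)) (t.substAll (numEnv ρ)) (s.substAll (numEnv ρ))
      have tr2 := eqTransF (numeral (t.val ρ)) (s.substAll (numEnv ρ)) (numeral (s.val ρ))
      exact tc6 h1 h2 hn symF tr1 tr2
        (fun v e1 e2 hn s t1 t2 hab => hn (t2 (t1 (s e1) hab) e2))
  | le t s =>
    intro ρ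
    have h1 := termEval t ρ
    have h2 := termEval s ρ
    constructor
    · intro hs
      have hle : t.val ρ ≤ s.val ρ := hs
      have step1 := ((leSubstL (numeral (t.val ρ)) (t.substAll (numEnv ρ))
        (numeral (s.val ρ))).mp (eqSym' h1)).mp (leNum hle)
      exact ((leSubstR (numeral (s.val ρ)) (s.substAll (numEnv ρ))
        (t.substAll (numEnv ρ))).mp (eqSym' h2)).mp step1
    · intro hs
      have hlt : s.val ρ < t.val ρ := by
        have : ¬ t.val ρ ≤ s.val ρ := hs
        omega
      have hn := nleNum hlt
      have lsl := leSubstL (t.substAll (numEnv ρ)) (numeral (t.val ρ)) (s.substAll (numEnv ρ))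
      have lsr := leSubstR (s.substAll (numEnv ρ)) (numeral (s.val ρ)) (numeral (t.val ρ))
      exact tc5 h1 h2 hn lsl lsr (fun v e1 e2 hn f g hab => hn (g e2 (f e1 hab)))
  | neg h ih =>
    rename_i φ
    intro ρ
    refine ⟨fun hs => (ih ρ).2 hs, fun hs => ?_⟩
    have hsat : φ.Sat ρ := Classical.byContradiction (fun hc => hs hc)
    exact tc1 ((ih ρ).1 hsat) (fun v a b => b a)
  | and h1 h2 ih1 ih2 =>
    rename_i φ ψ
    intro ρ
    constructor
    · intro hs
      exact tc2 ((ih1 ρ).1 hs.1) ((ih2 ρ).1 hs.2) (fun v a b => ⟨a, b⟩)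
    · intro hs
      by_cases hφ : φ.Sat ρ
      · have hψ : ¬ ψ.Sat ρ := fun h => hs ⟨hφ, h⟩
        exact tc1 ((ih2 ρ).2 hψ) (fun v a c => a c.2)
      · exact tc1 ((ih1 ρ).2 hφ) (fun v a c => a c.1)
  | or h1 h2 ih1 ih2 =>
    rename_i φ ψ
    intro ρ
    constructor
    · intro hs
      rcases (hs : φ.Sat ρ ∨ ψ.Sat ρ) with hs | hs
      · exact tc1 ((ih1 ρ).1 hs) (fun v a => Or.inl a)
      · exact tc1 ((ih2 ρ).1 hs) (fun v a => Or.inr a)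
    · intro hs
      exact tc2 ((ih1 ρ).2 (fun h => hs (Or.inl h))) ((ih2 ρ).2 (fun h => hs (Or.inr h)))
        (fun v a b o => o.elim a b)
  | imp h1 h2 ih1 ih2 =>
    rename_i φ ψ
    intro ρ
    constructor
    · intro hs
      by_cases hφ : φ.Sat ρ
      · exact tc1 ((ih2 ρ).1 (hs hφ)) (fun v b _ => b)
      · exact tc1 ((ih1 ρ).2 hφ) (fun v n a => absurd a n)
    · intro hs
      have hsat : φ.Sat ρ ∧ ¬ ψ.Sat ρ := by
        by_cases hφ : φ.Sat ρ
        · exact ⟨hφ, fun h2' => hs (fun _ => h2')⟩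
        · exact absurd (fun hc => absurd hc hφ) hs
      exact tc2 ((ih1 ρ).1 hsat.1) ((ih2 ρ).2 hsat.2) (fun v a b f => b (f a))
  | ball t hφ ih =>
    rename_i φ
    intro ρ
    have hbc : (t.substAll (numEnv ρ)).FreeLt 0 :=
      ATerm.freeLt_substAll (fun n => numeral_freeLt 0 (ρ n)) t
    have hsub : (AFml.all (.imp (.le (.var 0) (ATerm.lift 0 t)) φ)).substAll (numEnv ρ)
        = .all (.imp (.le (.var 0) (t.substAll (numEnv ρ)))
            (φ.substAll (liftSub (numEnv ρ)))) := by
      simp only [AFml.substAll, ATerm.substAll, liftSub, ATerm.lift_substAll_liftSub]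
      rw [ATerm.lift_id_of_freeLt hbc]
    rw [hsub]
    have hbN : Thm (.eq (t.substAll (numEnv ρ)) (numeral (t.val ρ))) := termEval t ρ
    have hf1 := freeLt1_substAll_liftSub φ ρ
    constructor
    · intro hs
      have hinst : ∀ i ≤ t.val ρ, Thm ((φ.substAll (liftSub (numEnv ρ))).subst0 (numeral i)) := by
        intro i hi
        rw [subst_numEnv_cons]
        refine (ih (consEnv i ρ)).1 ?_
        have hsi := hs i
        exact hsi (by simpa [AFml.Sat, ATerm.val, consEnv, ATerm.val_lift] using hi)
      have himp : Thm (.imp (casesAt (.var 0) (t.val ρ)) (φ.substAll (liftSub (numEnv ρ)))) :=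
        casesElim (n := t.val ρ) (fun i hi => eqCaseImp hf1 (hinst i hi))
      have hm := impComp (caseLemmaM (t.val ρ)) himp
      exact Proves.gen (tc3 hbN hm (leSubstR (t.substAll (numEnv ρ)) (numeral (t.val ρ)) (.var 0))
        (fun v e f g hx => f (g e hx)))
    · intro hs
      have hex : ∃ i, i ≤ t.val ρ ∧ ¬ φ.Sat (consEnv i ρ) := by
        by_contra hc
        push_neg at hc
        exact hs (fun i hle => hc i (by simpa [AFml.Sat, ATerm.val, consEnv, ATerm.val_lift] using hle))
      obtain ⟨i, hile, hnφ⟩ := hex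
      have hneg : Thm (.neg ((φ.substAll (liftSub (numEnv ρ))).subst0 (numeral i))) := by
        rw [subst_numEnv_cons]; exact (ih (consEnv i ρ)).2 hnφ
      have hle : Thm (.le (numeral i) (t.substAll (numEnv ρ))) :=
        ((leSubstR (numeral (t.val ρ)) (t.substAll (numEnv ρ)) (numeral i)).mp
          (eqSym' hbN)).mp (leNum hile)
      have hallE := Proves.allE (Γ := PA)
        (.imp (.le (.var 0) (t.substAll (numEnv ρ))) (φ.substAll (liftSub (numEnv ρ))))
        (numeral i)
      have hcomp : (AFml.imp (.le (.var 0) (t.substAll (numEnv ρ)))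
            (φ.substAll (liftSub (numEnv ρ)))).subst0 (numeral i)
          = .imp (.le (numeral i) (t.substAll (numEnv ρ)))
              ((φ.substAll (liftSub (numEnv ρ))).subst0 (numeral i)) := by
        simp only [AFml.subst0, AFml.substAll, ATerm.substAll, subst0Env]
        rw [ATerm.substAll_id_of_freeLt (fun n hn => absurd hn (Nat.not_lt_zero n)) hbc]
      rw [hcomp] at hallE
      exact tc3 hallE hle hneg (fun v f l n ha => n (f ha l))
  | bex t hφ ih =>
    rename_i φ
    intro ρ
    have hbc : (t.substAll (numEnv ρ)).FreeLt 0 :=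
      ATerm.freeLt_substAll (fun n => numeral_freeLt 0 (ρ n)) t
    have hsub : (AFml.ex (.and (.le (.var 0) (ATerm.lift 0 t)) φ)).substAll (numEnv ρ)
        = .ex (.and (.le (.var 0) (t.substAll (numEnv ρ)))
            (φ.substAll (liftSub (numEnv ρ)))) := by
      simp only [AFml.substAll, ATerm.substAll, liftSub, ATerm.lift_substAll_liftSub]
      rw [ATerm.lift_id_of_freeLt hbc]
    rw [hsub]
    have hbN : Thm (.eq (t.substAll (numEnv ρ)) (numeral (t.val ρ))) := termEval t ρ
    have hf1 := freeLt1_substAll_liftSub φ ρ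
    have hcomp : ∀ i : ℕ, (AFml.and (.le (.var 0) (t.substAll (numEnv ρ)))
          (φ.substAll (liftSub (numEnv ρ)))).subst0 (numeral i)
        = .and (.le (numeral i) (t.substAll (numEnv ρ)))
            ((φ.substAll (liftSub (numEnv ρ))).subst0 (numeral i)) := by
      intro i
      simp only [AFml.subst0, AFml.substAll, ATerm.substAll, subst0Env]
      rw [ATerm.substAll_id_of_freeLt (fun n hn => absurd hn (Nat.not_lt_zero n)) hbc]
    constructor
    · intro hs
      obtain ⟨i, hi⟩ := hs
      have hile : i ≤ t.val ρ := by
        have := hi.1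
        simpa [AFml.Sat, ATerm.val, consEnv, ATerm.val_lift] using this
      have hφi : Thm ((φ.substAll (liftSub (numEnv ρ))).subst0 (numeral i)) := by
        rw [subst_numEnv_cons]; exact (ih (consEnv i ρ)).1 hi.2
      refine exI' (numeral i) ?_
      rw [hcomp i]
      have hle : Thm (.le (numeral i) (t.substAll (numEnv ρ))) :=
        ((leSubstR (numeral (t.val ρ)) (t.substAll (numEnv ρ)) (numeral i)).mp
          (eqSym' hbN)).mp (leNum hile)
      exact tc2 hle hφi (fun v a c => ⟨a, c⟩)
    · intro hs
      have hinst : ∀ i ≤ t.val ρ, Thm (.imp (.eq (.var 0) (numeral i))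
          (.neg (φ.substAll (liftSub (numEnv ρ))))) := by
        intro i hi
        refine eqCaseImpNeg hf1 ?_
        rw [subst_numEnv_cons]
        refine (ih (consEnv i ρ)).2 (fun hc => hs ?_)
        exact ⟨i, ⟨by simpa [AFml.Sat, ATerm.val, consEnv, ATerm.val_lift] using hi, hc⟩⟩
      have himp := casesElim (n := t.val ρ) hinst
      have hchain := impComp (caseLemmaM (t.val ρ)) himp
      have matrix : Thm (.neg (.and (.le (.var 0) (t.substAll (numEnv ρ)))
          (φ.substAll (liftSub (numEnv ρ))))) :=
        tc3 hbN hchain (leSubstR (t.substAll (numEnv ρ)) (numeral (t.val ρ)) (.var 0))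
          (fun v e f g c => f (g e c.1) c.2)
      have hexd := Proves.exDef (Γ := PA) (.and (.le (.var 0) (t.substAll (numEnv ρ)))
        (φ.substAll (liftSub (numEnv ρ))))
      exact tc2 (Proves.gen matrix) hexd (fun v ha ed he => ed.1 he ha)

/-! ### The mutual Σ₁/Π₁ completeness -/

/-- Positive motive. -/
def SigP (φ : AFml) : Prop := ∀ ρ, φ.Sat ρ → Proves PA (φ.substAll (numEnv ρ))
/-- Negative motive. -/
def PiQ (φ : AFml) : Prop := ∀ ρ, ¬ φ.Sat ρ → Proves PA (.neg (φ.substAll (numEnv ρ)))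

lemma caseS1 : ∀ {φ : AFml}, IsDelta0 φ → SigP φ :=
  fun hd ρ hs => (delta0_complete hd ρ).1 hs

lemma caseS2 : ∀ {φ ψ : AFml}, IsSigma1 φ → IsSigma1 ψ → SigP φ → SigP ψ → SigP (.and φ ψ) :=
  fun _ _ ih1 ih2 ρ hs => tc2 (ih1 ρ hs.1) (ih2 ρ hs.2) (fun v a b => ⟨a, b⟩)

lemma caseS3 : ∀ {φ ψ : AFml}, IsSigma1 φ → IsSigma1 ψ → SigP φ → SigP ψ → SigP (.or φ ψ) := by
  intro φ ψ _ _ ih1 ih2 ρ hs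
  rcases (hs : φ.Sat ρ ∨ ψ.Sat ρ) with h | h
  · exact tc1 (ih1 ρ h) (fun v a => Or.inl a)
  · exact tc1 (ih2 ρ h) (fun v a => Or.inr a)

lemma caseS4 : ∀ {φ : AFml}, IsSigma1 φ → SigP φ → SigP (.ex φ) := by
  intro φ _ ih ρ hs
  obtain ⟨a, ha⟩ := hs
  exact exI' (numeral a) (by rw [subst_numEnv_cons]; exact ih (consEnv a ρ) ha)

lemma caseS5 : ∀ {φ : AFml}, IsPi1 φ → PiQ φ → SigP (.neg φ) :=
  fun _ ih ρ hs => ih ρ hs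

lemma caseS6 : ∀ {φ ψ : AFml}, IsPi1 φ → IsSigma1 ψ → PiQ φ → SigP ψ → SigP (.imp φ ψ) := by
  intro φ ψ _ _ ih1 ih2 ρ hs
  by_cases hφ : φ.Sat ρ
  · exact tc1 (ih2 ρ (hs hφ)) (fun v b _ => b)
  · exact tc1 (ih1 ρ hφ) (fun v n a => absurd a n)

lemma caseP1 : ∀ {φ : AFml}, IsDelta0 φ → PiQ φ :=
  fun hd ρ hs => (delta0_complete hd ρ).2 hs

lemma caseP2 : ∀ {φ ψ : AFml}, IsPi1 φ → IsPi1 ψ → PiQ φ → PiQ ψ → PiQ (.and φ ψ) := by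
  intro φ ψ _ _ ih1 ih2 ρ hs
  by_cases hφ : φ.Sat ρ
  · exact tc1 (ih2 ρ (fun h => hs ⟨hφ, h⟩)) (fun v a c => a c.2)
  · exact tc1 (ih1 ρ hφ) (fun v a c => a c.1)

lemma caseP3 : ∀ {φ ψ : AFml}, IsPi1 φ → IsPi1 ψ → PiQ φ → PiQ ψ → PiQ (.or φ ψ) :=
  fun _ _ ih1 ih2 ρ hs =>
    tc2 (ih1 ρ (fun h => hs (Or.inl h))) (ih2 ρ (fun h => hs (Or.inr h)))
      (fun v a b o => o.elim a b)

lemma caseP4 : ∀ {φ : AFml}, IsPi1 φ → PiQ φ → PiQ (.all φ) := by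
  intro φ _ ih ρ hs
  have hex : ∃ a, ¬ φ.Sat (consEnv a ρ) := by
    by_contra hc; push_neg at hc; exact hs hc
  obtain ⟨a, ha⟩ := hex
  have hneg : Proves PA (.neg ((φ.substAll (liftSub (numEnv ρ))).subst0 (numeral a))) := by
    rw [subst_numEnv_cons]; exact ih (consEnv a ρ) ha
  have hallE := Proves.allE (Γ := PA) (φ.substAll (liftSub (numEnv ρ))) (numeral a)
  exact tc2 hallE hneg (fun v f n hall => n (f hall))

lemma caseP5 : ∀ {φ : AFml}, IsSigma1 φ → SigP φ → PiQ (.neg φ) := by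
  intro φ _ ih ρ hs
  have hsat : φ.Sat ρ := Classical.byContradiction (fun hc => hs hc)
  exact tc1 (ih ρ hsat) (fun v a n => n a)

lemma caseP6 : ∀ {φ ψ : AFml}, IsSigma1 φ → IsPi1 ψ → SigP φ → PiQ ψ → PiQ (.imp φ ψ) := by
  intro φ ψ _ _ ih1 ih2 ρ hs
  have hsat : φ.Sat ρ ∧ ¬ ψ.Sat ρ := by
    by_cases hφ : φ.Sat ρ
    · exact ⟨hφ, fun h2' => hs (fun _ => h2')⟩
    · exact absurd (fun hc => absurd hc hφ) hs
  exact tc2 (ih1 ρ hsat.1) (ih2 ρ hsat.2) (fun v a b f => b (f a))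

lemma sigma1_complete_env {φ : AFml} (h : IsSigma1 φ) : SigP φ :=
  PLN.IsSigma1.rec (motive_1 := fun φ _ => SigP φ) (motive_2 := fun φ _ => PiQ φ)
    (fun a => caseS1 a) (fun a b ih1 ih2 => caseS2 a b ih1 ih2)
    (fun a b ih1 ih2 => caseS3 a b ih1 ih2) (fun a ih => caseS4 a ih)
    (fun a ih => caseS5 a ih) (fun a b ih1 ih2 => caseS6 a b ih1 ih2)
    (fun a => caseP1 a) (fun a b ih1 ih2 => caseP2 a b ih1 ih2)
    (fun a b ih1 ih2 => caseP3 a b ih1 ih2) (fun a ih => caseP4 a ih)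
    (fun a ih => caseP5 a ih) (fun a b ih1 ih2 => caseP6 a b ih1 ih2) h

/-- Σ₁-completeness of PA for sentences. -/
lemma sigma1_complete {φ : AFml} (h : IsSigma1 φ) (hsent : φ.FreeLt 0) (ht : TrueN φ) :
    Proves PA φ := by
  have hres := sigma1_complete_env h (fun _ => 0) ht
  rwa [AFml.substAll_id_of_freeLt (c := 0)
    (fun n hn => absurd hn (Nat.not_lt_zero n)) hsent] at hres
/-- Claim 4.1: Suppose `T` is `Σ₁`-sound. Then
`Prov_T^Σ(x) := Prov_T(x) ∧ (Σ₁(x) → True_Σ₁(x))` is a provability predicate of `T`: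
for any arithmetical formula `φ`, `T ⊢ φ` if and only if `PA ⊢ Prov_T^Σ(⌜φ⌝)`. -/
theorem statement_13 (Tax : Set AFml) (hext : PA ⊆ Tax)
    (hcons : ¬ Proves Tax botFml) (hpr : PrAxiomatized Tax)
    (hsound : Sigma1Sound Tax)
    -- `ProvT` is the standard `Σ₁` provability predicate of `T`
    (ProvT : AFml) (hProvT_free : ProvT.FreeLt 1) (hProvT_sig : IsSigma1 ProvT)
    (hProvT : ∀ φ : AFml, Proves Tax φ ↔ Proves PA (ProvT.appNum φ))
    (hProvT_sem : ∀ φ : AFml, TrueN (ProvT.appNum φ) ↔ Proves Tax φ)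
    -- `SigF` is a `Δ₁(PA)` formula naturally expressing "x is a `Σ₁` sentence"
    (SigF : AFml) (hSigF_free : SigF.FreeLt 1) (hSigF_d1 : IsDelta1PA SigF)
    (hSigF_pos : ∀ φ : AFml, IsSigma1 φ → φ.FreeLt 0 → Proves PA (SigF.appNum φ))
    (hSigF_neg : ∀ φ : AFml, ¬ (IsSigma1 φ ∧ φ.FreeLt 0) → Proves PA (.neg (SigF.appNum φ)))
    -- `TrF` is a `Σ₁` truth definition for `Σ₁` sentences
    (TrF : AFml) (hTrF_free : TrF.FreeLt 1) (hTrF_sig : IsSigma1 TrF)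
    (hTrF : ∀ σ : AFml, IsSigma1 σ → σ.FreeLt 0 → Proves PA (iffF σ (TrF.appNum σ))) :
    ∀ φ : AFml,
      Proves Tax φ ↔ Proves PA ((AFml.and ProvT (.imp SigF TrF)).appNum φ) := by
  intro φ
  have hdistr : (AFml.and ProvT (.imp SigF TrF)).appNum φ
      = .and (ProvT.appNum φ) (.imp (SigF.appNum φ) (TrF.appNum φ)) := rfl
  rw [hdistr]
  constructor
  · intro hT
    have h1 : Proves PA (ProvT.appNum φ) := (hProvT φ).mp hT
    have h2 : Proves PA (.imp (SigF.appNum φ) (TrF.appNum φ)) := by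
      by_cases hσ : IsSigma1 φ ∧ φ.FreeLt 0
      · have htrue : TrueN φ := hsound φ hσ.1 hσ.2 hT
        have hpa : Proves PA φ := sigma1_complete hσ.1 hσ.2 htrue
        have hiff := hTrF φ hσ.1 hσ.2
        have htr : Proves PA (TrF.appNum φ) := tc2 hiff hpa (fun v i a => i.1 a)
        exact tc1 htr (fun v a _ => a)
      · exact tc1 (hSigF_neg φ hσ) (fun v n a => absurd a n)
    exact tc2 h1 h2 (fun v a b => ⟨a, b⟩)
  · intro hPA
    exact (hProvT φ).mpr (tc1 hPA (fun v c => c.1))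

end PLN
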